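/- arXiv:1902.10243 — 3 statements merged into one kernel-verified Lean document; each statement's English description precedes it below -/
import Mathlib

section
/- Let S be a set, X a metric space, φ : S → X a map, ℓ, ε ≥ 0, and f : S → ℝ a bounded function. If |f(s) - f(t)| ≤ ℓ·d(φ(s), φ(t)) + ε for all s, t ∈ S, then there exists a bounded ℓ-Lipschitz function F : X → ℝ such that ‖f - F ∘ φ‖_∞ ≤ ε. -/
/-!
McShane's construction applied to the pulled-back data: `G x = sup_t (f t - ℓ · d(x, φ t))` is
`ℓ`-Lipschitz as a supremum of `ℓ`-Lipschitz functions, and the hypothesis squeezes `G ∘ φ`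
between `f` and `f + ε`. Clamping `G` to an interval `[-C, C]` containing the values of `f`
makes it bounded without losing the Lipschitz constant or the approximation, since the clamp is
`1`-Lipschitz and fixes `f`.
-/

open Set NNReal

theorem LipschitzWith.ciSup {ι X : Type*} [PseudoMetricSpace X] {K : ℝ≥0} {F : ι → X → ℝ}
    (hF : ∀ i, LipschitzWith K (F i)) (hbdd : ∀ x, BddAbove (range fun i => F i x)) :
    LipschitzWith K fun x => ⨆ i, F i x := by
  rcases isEmpty_or_nonempty ι with hι | hι
  · simpa only [Real.iSup_of_isEmpty] using LipschitzWith.const' (α := X) (K := K) (0 : ℝ)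
  refine LipschitzWith.of_le_add_mul K fun x y => ciSup_le fun i => ?_
  calc F i x ≤ F i y + K * dist x y := (hF i).le_add_mul x y
    _ ≤ (⨆ i, F i y) + K * dist x y := by gcongr; exact le_ciSup (hbdd y) i

theorem exists_lipschitzWith_le_comp_le_add {S X : Type*} [PseudoMetricSpace X] (φ : S → X)
    (K : ℝ≥0) {ε : ℝ} {f : S → ℝ} (hf : BddAbove (range f))
    (h : ∀ s t, f s - f t ≤ K * dist (φ s) (φ t) + ε) :
    ∃ G : X → ℝ, LipschitzWith K G ∧ ∀ s, f s ≤ G (φ s) ∧ G (φ s) ≤ f s + ε := by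
  obtain ⟨C, hC⟩ := hf
  have hbdd : ∀ x, BddAbove (range fun t => f t - K * dist x (φ t)) := by
    refine fun x => ⟨C, forall_mem_range.mpr fun t => ?_⟩
    have : f t ≤ C := hC (mem_range_self t)
    have : 0 ≤ (K : ℝ) * dist x (φ t) := by positivity
    linarith
  have hcone : ∀ t, LipschitzWith K fun x => f t - K * dist x (φ t) := fun t =>
    LipschitzWith.of_le_add_mul K fun x y => by
      have : (K : ℝ) * dist y (φ t) ≤ K * (dist x y + dist x (φ t)) := by
        gcongr; exact dist_triangle_left y (φ t) x
      linarith
  refine ⟨_, LipschitzWith.ciSup hcone hbdd, fun s => ⟨?_, ?_⟩⟩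
  · simpa using le_ciSup (hbdd (φ s)) s
  · have : Nonempty S := ⟨s⟩
    refine ciSup_le fun t => ?_
    have := h t s
    rw [dist_comm] at this
    linarith

theorem abs_sub_projIcc_le {a b y : ℝ} (hab : a ≤ b) (hy : y ∈ Icc a b) (z : ℝ) :
    |y - projIcc a b hab z| ≤ |y - z| := by
  simpa [projIcc_of_mem hab hy, Subtype.dist_eq, Real.dist_eq] using
    (LipschitzWith.projIcc hab).dist_le_mul y z

theorem lipschitz_approximation_general {S X : Type*} [MetricSpace X]
    (φ : S → X) (ℓ ε : ℝ)
    (f : S → ℝ) (hbdd : ∃ C : ℝ, ∀ s : S, |f s| ≤ C)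
    (h : ∀ s t : S, |f s - f t| ≤ ℓ * dist (φ s) (φ t) + ε) :
    ∃ F : X → ℝ, LipschitzWith (Real.toNNReal ℓ) F ∧ (∃ C : ℝ, ∀ x : X, |F x| ≤ C) ∧
      ∀ s : S, |f s - F (φ s)| ≤ ε := by
  obtain ⟨C, hC⟩ := hbdd
  have hf : ∀ s, f s ∈ Icc (-|C|) |C| := fun s => abs_le.mp ((hC s).trans (le_abs_self C))
  have hK : ∀ s t, f s - f t ≤ ℓ.toNNReal * dist (φ s) (φ t) + ε := fun s t =>
    (le_abs_self _).trans <| (h s t).trans <| by gcongr; exact Real.le_coe_toNNReal ℓ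
  obtain ⟨G, hG, hfG⟩ :=
    exists_lipschitzWith_le_comp_le_add φ _ ⟨|C|, forall_mem_range.mpr fun s => (hf s).2⟩ hK
  have hCC : -|C| ≤ |C| := neg_abs_le C |>.trans (le_abs_self C)
  refine ⟨fun x => projIcc (-|C|) |C| hCC (G x), ?_,
    ⟨|C|, fun x => abs_le.mpr (projIcc _ _ hCC (G x)).2⟩,
    fun s => (abs_sub_projIcc_le hCC (hf s) _).trans ?_⟩
  · simpa [Function.comp_def] using
      LipschitzWith.subtype_val _ |>.comp (LipschitzWith.projIcc hCC) |>.comp hG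
  · obtain ⟨h₁, h₂⟩ := hfG s
    exact abs_sub_le_iff.mpr ⟨by linarith, by linarith⟩

/-- Lipschitz approximation lemma: if `f : S → ℝ` is bounded and
`|f s - f t| ≤ ℓ · d(φ s, φ t) + ε` for all `s, t`, then there is a bounded
`ℓ`-Lipschitz function `F : X → ℝ` with `‖f - F ∘ φ‖_∞ ≤ ε`. -/
theorem lipschitz_approximation {S X : Type*} [MetricSpace X]
    (φ : S → X) (ℓ ε : ℝ) (hℓ : 0 ≤ ℓ) (hε : 0 ≤ ε)
    (f : S → ℝ) (hbdd : ∃ C : ℝ, ∀ s : S, |f s| ≤ C)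
    (h : ∀ s t : S, |f s - f t| ≤ ℓ * dist (φ s) (φ t) + ε) :
    ∃ F : X → ℝ, LipschitzWith (Real.toNNReal ℓ) F ∧ (∃ C : ℝ, ∀ x : X, |F x| ≤ C) ∧
      ∀ s : S, |f s - F (φ s)| ≤ ε :=
  lipschitz_approximation_general φ ℓ ε f hbdd h
end

section
/- Let G be a topological group acting continuously by isometries on a metric space X, and let x ∈ X. Then the set L_x(G,X) = {g ↦ f(g⁻¹x) | f : X → ℝ 1-Lipschitz, |f| ≤ 1} is a norm-bounded, right-uniformly equicontinuous family of right-uniformly continuous bounded functions on G, is convex, right-translation closed, and compact in the topology of pointwise convergence. -/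
/-!
Every element of `L_x(G,X)` is the pull-back of a function in the set `K` of 1-Lipschitz
functions `X → ℝ` bounded by `1`, along the orbit map `g ↦ g⁻¹ • x`; this pull-back is linear
and continuous for the product topologies. `K` is cut out of `[-1, 1]^X` by closed convex
conditions, so it is compact (Tychonoff) and convex, and these properties pass to its image.
Right translation by `g` corresponds to precomposing `f ∈ K` with the isometry `g⁻¹ • ·`, and
since the action is isometric, `|f (g⁻¹ • x) - f (g'⁻¹ • x)| ≤ dist ((g * g'⁻¹)⁻¹ • x) x`,
which is small uniformly in `f` once `g * g'⁻¹` is close to `1`.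
-/

open Set Topology

section LipschitzUnitBall

variable (X : Type*) [PseudoMetricSpace X]

def lipschitzUnitBall : Set (X → ℝ) :=
  {f | LipschitzWith 1 f ∧ ∀ y, |f y| ≤ 1}

theorem lipschitzUnitBall_eq_iInter :
    lipschitzUnitBall X =
      (⋂ (y : X) (z : X), {f : X → ℝ | |f y - f z| ≤ dist y z}) ∩ ⋂ y : X, {f | |f y| ≤ 1} := by
  ext f
  simp only [lipschitzUnitBall, mem_ofPred_eq, mem_inter_iff, mem_iInter,
    lipschitzWith_iff_dist_le_mul, NNReal.coe_one, one_mul, Real.dist_eq]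

theorem convex_lipschitzUnitBall : Convex ℝ (lipschitzUnitBall X) := by
  have abs_le : ∀ (ℓ : (X → ℝ) →ₗ[ℝ] ℝ) (c : ℝ), Convex ℝ {f | |ℓ f| ≤ c} := fun ℓ c => by
    simpa [Metric.closedBall, Real.dist_eq] using (convex_closedBall (0 : ℝ) c).linear_preimage ℓ
  rw [lipschitzUnitBall_eq_iInter]
  refine (convex_iInter fun y => convex_iInter fun z => ?_).inter
    (convex_iInter fun y => abs_le (LinearMap.proj (R := ℝ) (φ := fun _ : X => ℝ) y) 1)
  exact abs_le (LinearMap.proj (R := ℝ) (φ := fun _ : X => ℝ) y - LinearMap.proj z) (dist y z)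

theorem isClosed_lipschitzUnitBall : IsClosed (lipschitzUnitBall X) := by
  rw [lipschitzUnitBall_eq_iInter]
  refine (isClosed_iInter fun y => isClosed_iInter fun z => ?_).inter
    (isClosed_iInter fun y => isClosed_le (continuous_apply y).abs continuous_const)
  exact isClosed_le ((continuous_apply y).sub (continuous_apply z)).abs continuous_const

theorem isCompact_lipschitzUnitBall : IsCompact (lipschitzUnitBall X) :=
  (isCompact_univ_pi fun _ => isCompact_Icc (a := (-1 : ℝ)) (b := 1)).of_isClosed_subset
    (isClosed_lipschitzUnitBall X) fun _ hf y _ => abs_le.mp (hf.2 y)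

end LipschitzUnitBall

section OrbitPullback

variable {G X : Type*} [Group G] [PseudoMetricSpace X] [MulAction G X] [IsIsometricSMul G X]

theorem comp_smul_mem_lipschitzUnitBall {f : X → ℝ} (hf : f ∈ lipschitzUnitBall X) (g : G) :
    (fun y => f (g • y)) ∈ lipschitzUnitBall X := by
  refine ⟨?_, fun y => hf.2 _⟩
  simpa [Function.comp_def] using hf.1.comp (isometry_smul X g).lipschitz

theorem LipschitzWith.dist_apply_inv_smul_le {Y : Type*} [PseudoMetricSpace Y] {f : X → Y}
    (hf : LipschitzWith 1 f) (x : X) (g g' : G) :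
    dist (f (g⁻¹ • x)) (f (g'⁻¹ • x)) ≤ dist ((g * g'⁻¹)⁻¹ • x) x :=
  calc dist (f (g⁻¹ • x)) (f (g'⁻¹ • x)) ≤ dist (g⁻¹ • x) (g'⁻¹ • x) := by
        simpa using hf.dist_le_mul (g⁻¹ • x) (g'⁻¹ • x)
    _ = dist ((g * g'⁻¹)⁻¹ • x) x := by
        rw [← dist_smul g', smul_smul, smul_smul, mul_inv_cancel, one_smul, mul_inv_rev, inv_inv]

theorem exists_nhds_one_forall_dist_apply_inv_smul_le [TopologicalSpace G] [ContinuousInv G]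
    [ContinuousSMul G X] {Y : Type*} [PseudoMetricSpace Y] (x : X) {ε : ℝ} (hε : 0 < ε) :
    ∃ U ∈ 𝓝 (1 : G), ∀ f : X → Y, LipschitzWith 1 f → ∀ g g' : G,
      g * g'⁻¹ ∈ U → dist (f (g⁻¹ • x)) (f (g'⁻¹ • x)) ≤ ε := by
  have hU : {u : G | dist (u⁻¹ • x) x < ε} ∈ 𝓝 (1 : G) := by
    have hcont : Continuous fun u : G => u⁻¹ • x := continuous_inv.smul continuous_const
    exact (hcont.continuousAt (x := 1)).preimage_mem_nhds (t := Metric.ball x ε)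
      (by simpa using Metric.ball_mem_nhds x hε)
  exact ⟨_, hU, fun f hf g g' hg => (hf.dist_apply_inv_smul_le x g g').trans hg.le⟩

end OrbitPullback

/-- Let `G` be a topological group acting continuously by isometries on a metric space `X`
and let `x ∈ X`.  The set `L_x(G,X) = { g ↦ f(g⁻¹ • x) | f : X → ℝ 1-Lipschitz, |f| ≤ 1 }`
is norm-bounded, right-uniformly equicontinuous, convex, right-translation closed, and
compact in the topology of pointwise convergence. -/
theorem Lx_UEB_convex_rightClosed_compact
    {G X : Type*} [Group G] [TopologicalSpace G] [IsTopologicalGroup G]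
    [MetricSpace X] [MulAction G X]
    (hiso : ∀ (g : G) (y z : X), dist (g • y) (g • z) = dist y z)
    (hcont : Continuous fun p : G × X => p.1 • p.2) (x : X) :
    let L : Set (G → ℝ) := {h | ∃ f : X → ℝ, LipschitzWith 1 f ∧ (∀ y : X, |f y| ≤ 1) ∧
      h = fun g : G => f (g⁻¹ • x)}
    (∃ C : ℝ, ∀ h ∈ L, ∀ g : G, |h g| ≤ C) ∧
    (∀ ε : ℝ, 0 < ε → ∃ U ∈ nhds (1 : G), ∀ h ∈ L, ∀ g g' : G,
      g * g'⁻¹ ∈ U → |h g - h g'| ≤ ε) ∧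
    Convex ℝ L ∧
    (∀ h ∈ L, ∀ g : G, (fun g' : G => h (g' * g)) ∈ L) ∧
    IsCompact L := by
  intro L
  have : IsIsometricSMul G X := ⟨fun g => Isometry.of_dist_eq (hiso g)⟩
  have : ContinuousSMul G X := ⟨hcont⟩
  set pullback := LinearMap.funLeft ℝ ℝ fun g : G => g⁻¹ • x
  have hL : L = pullback '' lipschitzUnitBall X := by
    ext h
    exact ⟨fun ⟨f, hlip, hbd, hh⟩ => ⟨f, ⟨hlip, hbd⟩, hh.symm⟩,
      fun ⟨f, ⟨hlip, hbd⟩, hh⟩ => ⟨f, hlip, hbd, hh.symm⟩⟩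
  have hpullback : Continuous pullback := continuous_pi fun g => continuous_apply (g⁻¹ • x)
  rw [hL]
  refine ⟨⟨1, ?_⟩, fun ε hε => ?_, (convex_lipschitzUnitBall X).linear_image pullback, ?_,
    (isCompact_lipschitzUnitBall X).image hpullback⟩
  · rintro _ ⟨f, hf, rfl⟩ g
    exact hf.2 _
  · obtain ⟨U, hU, hUf⟩ := exists_nhds_one_forall_dist_apply_inv_smul_le (G := G) (Y := ℝ) x hε
    refine ⟨U, hU, ?_⟩
    rintro _ ⟨f, hf, rfl⟩ g g' hg
    exact hUf f hf.1 g g' hg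
  · rintro _ ⟨f, hf, rfl⟩ g
    refine ⟨_, comp_smul_mem_lipschitzUnitBall hf g⁻¹, funext fun g' => ?_⟩
    simp [pullback, LinearMap.funLeft_apply, mul_smul]
end

section
/- Let X be a metric space and G a topological subgroup of Iso(X) (with topology of pointwise convergence). Then the set L(G,X) = ⋃_{n∈ℕ} ⋃_{x∈Xⁿ} {g ↦ F(g⁻¹x) | F : Xⁿ → ℝ 1-Lipschitz with |F| ≤ 1} generates a dense linear subspace of RUCB(G), where Xⁿ carries the supremum metric. -/
/-!
Right uniform continuity of `f` gives, for each `ε`, a neighbourhood `{g | d(g • x, x) < δ}` of `1`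
with `x ∈ Xⁿ` finite, so `f` is uniformly continuous in `π g = g⁻¹ • x`. A bounded function `u`
(the real or imaginary part of `f`) then satisfies `u g ≤ u h + ℓ d(π g, π h) + ε` with `ℓ = 2C/δ`,
and the infimal convolution `y ↦ inf_h (u h + ℓ d(y, π h))`, truncated at the bound, is a bounded
`ℓ`-Lipschitz `F` with `|u - F ∘ π| ≤ ε`. Rescaling `F` makes it `1`-Lipschitz with `|F| ≤ 1`.
-/

/-- Right uniform continuity of a complex-valued function on a topological group. -/
def RUC {G : Type*} [Group G] [TopologicalSpace G] (f : G → ℂ) : Prop :=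
  ∀ ε : ℝ, 0 < ε → ∃ U ∈ nhds (1 : G), ∀ x y : G, x * y⁻¹ ∈ U → ‖f x - f y‖ ≤ ε

open Filter Topology
open scoped NNReal

theorem exists_dist_smul_lt_imp_mem {G X : Type*} [Monoid G] [TopologicalSpace G]
    [PseudoMetricSpace X] [MulAction G X]
    (htop : ‹TopologicalSpace G› =
      TopologicalSpace.induced (fun (g : G) (x : X) => g • x) Pi.topologicalSpace)
    {U : Set G} (hU : U ∈ 𝓝 (1 : G)) :
    ∃ (n : ℕ) (x : Fin n → X) (δ : ℝ), 0 < δ ∧ ∀ g : G, dist (g • x) x < δ → g ∈ U := by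
  subst htop
  rw [nhds_induced, mem_comap] at hU
  obtain ⟨V, hV, hVU⟩ := hU
  rw [nhds_pi, mem_pi'] at hV
  obtain ⟨I, t, ht, hIV⟩ := hV
  set x : Fin I.card → X := fun i => I.equivFin.symm i
  have hx : Set.pi Set.univ (fun i => t (x i)) ∈ 𝓝 x :=
    set_pi_mem_nhds Set.finite_univ fun i _ => by simpa using ht (x i)
  obtain ⟨δ, hδ, hball⟩ := Metric.mem_nhds_iff.1 hx
  refine ⟨I.card, x, δ, hδ, fun g hg => hVU (hIV fun y hy => ?_)⟩
  simpa [x] using hball hg (I.equivFin ⟨y, hy⟩) (Set.mem_univ _)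

theorem exists_lipschitzWith_comp_approx {α Y : Type*} [Nonempty α] [PseudoMetricSpace Y]
    (π : α → Y) (u : α → ℝ) {C ε : ℝ} {ℓ : ℝ≥0} (hC : ∀ a, |u a| ≤ C)
    (hu : ∀ a b, u a ≤ u b + ℓ * dist (π a) (π b) + ε) :
    ∃ F : Y → ℝ, LipschitzWith ℓ F ∧ (∀ y, |F y| ≤ C) ∧ ∀ a, |u a - F (π a)| ≤ ε := by
  have hC₀ : 0 ≤ C := (abs_nonneg _).trans (hC (Classical.arbitrary α))
  have hlower : ∀ a y, -C ≤ u a + ℓ * dist y (π a) := fun a y => by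
    nlinarith [neg_le_of_abs_le (hC a), ℓ.coe_nonneg, dist_nonneg (x := y) (y := π a)]
  set F₀ : Y → ℝ := fun y => ⨅ a, u a + ℓ * dist y (π a)
  have hbdd : ∀ y, BddBelow (Set.range fun a => u a + ℓ * dist y (π a)) := fun y =>
    ⟨-C, by rintro _ ⟨a, rfl⟩; exact hlower a y⟩
  have hF₀C : ∀ y, -C ≤ F₀ y := fun y => le_ciInf fun a => hlower a y
  have hF₀le : ∀ a, F₀ (π a) ≤ u a := fun a => by simpa using ciInf_le (hbdd (π a)) a
  have hF₀ge : ∀ a, u a - ε ≤ F₀ (π a) := fun a =>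
    le_ciInf fun b => by linarith [hu a b, dist_comm (π a) (π b)]
  have hF₀ : LipschitzWith ℓ F₀ := LipschitzWith.of_le_add_mul ℓ fun y z => by
    rw [← sub_le_iff_le_add]
    refine le_ciInf fun a => ?_
    rw [sub_le_iff_le_add]
    calc F₀ y ≤ u a + ℓ * dist y (π a) := ciInf_le (hbdd y) a
      _ ≤ u a + ℓ * dist z (π a) + ℓ * dist y z := by
        rw [add_assoc, ← mul_add, add_comm (dist z _)]
        gcongr
        apply dist_triangle
  refine ⟨fun y => min (F₀ y) C, hF₀.min_const C,
    fun y => abs_le.2 ⟨le_min (hF₀C y) (by linarith), min_le_right _ _⟩, fun a => ?_⟩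
  show |u a - min (F₀ (π a)) C| ≤ ε
  rw [min_eq_left ((hF₀le a).trans (le_of_abs_le (hC a))), abs_le]
  constructor <;> linarith [hF₀le a, hF₀ge a]

theorem exists_le_add_mul_dist_add {α Y : Type*} [PseudoMetricSpace Y] (π : α → Y) (u : α → ℝ)
    {C δ ε : ℝ} (hC : ∀ a, |u a| ≤ C) (hδ : 0 < δ)
    (hu : ∀ a b, dist (π a) (π b) < δ → |u a - u b| ≤ ε) :
    ∃ ℓ : ℝ≥0, ∀ a b, u a ≤ u b + ℓ * dist (π a) (π b) + ε := by
  refine ⟨(2 * C / δ).toNNReal, fun a b => ?_⟩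
  rcases lt_or_ge (dist (π a) (π b)) δ with hd | hd
  · have := (abs_le.1 (hu a b hd)).2
    nlinarith [(2 * C / δ).toNNReal.coe_nonneg, dist_nonneg (x := π a) (y := π b)]
  · have hC₀ : 0 ≤ 2 * C / δ := by have := (abs_nonneg _).trans (hC a); positivity
    have hε : 0 ≤ ε := (abs_nonneg _).trans (hu a a (by simpa using hδ))
    calc u a ≤ u b + 2 * C := by linarith [le_of_abs_le (hC a), neg_le_of_abs_le (hC b)]
      _ = u b + 2 * C / δ * δ := by field_simp
      _ ≤ u b + (2 * C / δ).toNNReal * dist (π a) (π b) := by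
        rw [Real.coe_toNNReal _ hC₀]; gcongr
      _ ≤ _ := by linarith

theorem LipschitzWith.exists_eq_smul_unit {Y : Type*} [PseudoMetricSpace Y] {F : Y → ℝ}
    {K : ℝ≥0} {C : ℝ} (hF : LipschitzWith K F) (hC : ∀ y, |F y| ≤ C) :
    ∃ (c : ℝ) (F' : Y → ℝ), LipschitzWith 1 F' ∧ (∀ y, |F' y| ≤ 1) ∧ F = c • F' := by
  set c : ℝ := K + max C 1
  have hc : 0 < c := by positivity
  refine ⟨c, fun y => F y / c, LipschitzWith.of_dist_le_mul fun y z => ?_, fun y => ?_, ?_⟩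
  · rw [Real.dist_eq, div_sub_div_same, abs_div, abs_of_pos hc, NNReal.coe_one, one_mul,
      div_le_iff₀ hc, ← Real.dist_eq]
    calc dist (F y) (F z) ≤ K * dist y z := hF.dist_le_mul y z
      _ ≤ dist y z * c := by
        rw [mul_comm]; gcongr; exact le_add_of_nonneg_right (by positivity)
  · rw [abs_div, abs_of_pos hc, div_le_one hc]
    exact (hC y).trans ((le_max_left C 1).trans (le_add_of_nonneg_left K.coe_nonneg))
  · ext y
    simp [mul_div_cancel₀ _ hc.ne']

def unitLipschitzComp {α Y : Type*} [PseudoMetricSpace Y] (π : α → Y) : Set (α → ℂ) :=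
  {h | ∃ F : Y → ℝ, LipschitzWith 1 F ∧ (∀ y, |F y| ≤ 1) ∧ h = fun a => (F (π a) : ℂ)}

theorem exists_mem_span_unitLipschitzComp_near {α Y : Type*} [Nonempty α]
    [PseudoMetricSpace Y] (π : α → Y) (f : α → ℂ) {C δ ε : ℝ} (hC : ∀ a, ‖f a‖ ≤ C) (hδ : 0 < δ)
    (hf : ∀ a b, dist (π a) (π b) < δ → ‖f a - f b‖ ≤ ε) :
    ∃ h ∈ Submodule.span ℂ (unitLipschitzComp π), ∀ a, ‖f a - h a‖ ≤ 2 * ε := by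
  have approx : ∀ p : ℂ →ₗ[ℝ] ℝ, (∀ z, |p z| ≤ ‖z‖) → ∃ (c : ℝ) (F : Y → ℝ),
      LipschitzWith 1 F ∧ (∀ y, |F y| ≤ 1) ∧ ∀ a, |p (f a) - c * F (π a)| ≤ ε := by
    intro p hp
    have hpC : ∀ a, |p (f a)| ≤ C := fun a => (hp _).trans (hC a)
    obtain ⟨ℓ, hℓ⟩ := exists_le_add_mul_dist_add π (p ∘ f) hpC hδ fun a b hd => by
      simpa only [Function.comp_apply, ← map_sub] using (hp _).trans (hf a b hd)
    obtain ⟨F, hF, hFC, hFu⟩ := exists_lipschitzWith_comp_approx π (p ∘ f) hpC hℓ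
    obtain ⟨c, F', hF', hF'1, rfl⟩ := hF.exists_eq_smul_unit hFC
    exact ⟨c, F', hF', hF'1, hFu⟩
  obtain ⟨c₁, F₁, hF₁, hF₁1, h₁⟩ := approx Complex.reLm Complex.abs_re_le_norm
  obtain ⟨c₂, F₂, hF₂, hF₂1, h₂⟩ := approx Complex.imLm Complex.abs_im_le_norm
  refine ⟨(c₁ : ℂ) • (fun a => (F₁ (π a) : ℂ)) +
      ((c₂ : ℂ) * Complex.I) • fun a => (F₂ (π a) : ℂ),
    add_mem (Submodule.smul_mem _ _ (Submodule.subset_span ⟨F₁, hF₁, hF₁1, rfl⟩))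
      (Submodule.smul_mem _ _ (Submodule.subset_span ⟨F₂, hF₂, hF₂1, rfl⟩)), fun a => ?_⟩
  calc ‖f a - ((c₁ : ℂ) * F₁ (π a) + c₂ * Complex.I * F₂ (π a))‖
      ≤ |(f a).re - c₁ * F₁ (π a)| + |(f a).im - c₂ * F₂ (π a)| := by
        simpa using Complex.norm_le_abs_re_add_abs_im
          (f a - (c₁ * F₁ (π a) + c₂ * Complex.I * F₂ (π a)))
    _ ≤ ε + ε := add_le_add (h₁ a) (h₂ a)
    _ = 2 * ε := by ring

theorem span_Lipschitz_dense_in_RUCB_general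
    {G X : Type*} [Group G] [TopologicalSpace G] [MetricSpace X] [MulAction G X]
    (hiso : ∀ (g : G) (y z : X), dist (g • y) (g • z) = dist y z)
    (htop : ‹TopologicalSpace G› =
      TopologicalSpace.induced (fun (g : G) (x : X) => g • x) Pi.topologicalSpace) :
    let L : Set (G → ℂ) := {h | ∃ (n : ℕ) (x : Fin n → X) (F : (Fin n → X) → ℝ),
      LipschitzWith 1 F ∧ (∀ y : Fin n → X, |F y| ≤ 1) ∧
      h = fun g : G => ((F fun i => g⁻¹ • x i : ℝ) : ℂ)}
    ∀ f : G → ℂ, (∃ C : ℝ, ∀ g : G, ‖f g‖ ≤ C) → RUC f →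
      ∀ ε : ℝ, 0 < ε → ∃ h ∈ Submodule.span ℂ L, ∀ g : G, ‖f g - h g‖ ≤ ε := by
  intro L f ⟨C, hC⟩ hf ε hε
  have : IsIsometricSMul G X := ⟨fun g => Isometry.of_dist_eq (hiso g)⟩
  obtain ⟨U, hU, hfU⟩ := hf (ε / 2) (half_pos hε)
  obtain ⟨n, x, δ, hδ, hUx⟩ := exists_dist_smul_lt_imp_mem htop hU
  have hπ : ∀ g h : G, dist (g⁻¹ • x) (h⁻¹ • x) < δ → ‖f g - f h‖ ≤ ε / 2 := fun g h hd => by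
    refine hfU g h (hUx _ ?_)
    rwa [← dist_smul g, smul_inv_smul, smul_smul, dist_comm] at hd
  obtain ⟨h, hspan, hfh⟩ := exists_mem_span_unitLipschitzComp_near _ f hC hδ hπ
  refine ⟨h, Submodule.span_mono ?_ hspan, fun g => (hfh g).trans_eq (by ring)⟩
  rintro _ ⟨F, hF, hF1, rfl⟩
  exact ⟨n, x, F, hF, hF1, rfl⟩

/-- Let `X` be a metric space and `G` a topological subgroup of `Iso(X)` with the topology
of pointwise convergence (formalized as: a group acting faithfully and isometrically on `X`,
carrying the topology induced by the evaluation map into `X → X`).  Then the set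
`L(G,X) = ⋃ₙ ⋃_{x ∈ Xⁿ} { g ↦ F(g⁻¹ • x) | F : Xⁿ → ℝ 1-Lipschitz, |F| ≤ 1 }` generates a
dense linear subspace of `RUCB(G)`: every right-uniformly continuous bounded `f : G → ℂ`
can be uniformly approximated by elements of the linear span of `L(G,X)`. -/
theorem span_Lipschitz_dense_in_RUCB
    {G X : Type*} [Group G] [TopologicalSpace G] [MetricSpace X] [MulAction G X]
    (hiso : ∀ (g : G) (y z : X), dist (g • y) (g • z) = dist y z)
    (hinj : Function.Injective fun (g : G) (x : X) => g • x)
    (htop : ‹TopologicalSpace G› =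
      TopologicalSpace.induced (fun (g : G) (x : X) => g • x) Pi.topologicalSpace) :
    let L : Set (G → ℂ) := {h | ∃ (n : ℕ) (x : Fin n → X) (F : (Fin n → X) → ℝ),
      LipschitzWith 1 F ∧ (∀ y : Fin n → X, |F y| ≤ 1) ∧
      h = fun g : G => ((F fun i => g⁻¹ • x i : ℝ) : ℂ)}
    ∀ f : G → ℂ, (∃ C : ℝ, ∀ g : G, ‖f g‖ ≤ C) → RUC f →
      ∀ ε : ℝ, 0 < ε → ∃ h ∈ Submodule.span ℂ L, ∀ g : G, ‖f g - h g‖ ≤ ε :=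
  span_Lipschitz_dense_in_RUCB_general hiso htop
end
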